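/- Let 0 < q < 1, let λ > 0 be real, and let ν be a real number with ν > −1. Then for all real x with 0 < x and λ·x·(1−q) < q, the q-derivative at x of the function G(x) := ((qx)^{ν+1}/λ)·( −x²λ²(1−q)²/q² ; q²)_∞ · J_{ν+1}^{(1)}(λx/q | q²) equals x^{ν+1}·(−x²λ²(1−q)²; q²)_∞ · J_ν^{(1)}(λx | q²). -/

import Mathlib

/-!
Put `u = λx(1-q)`, `r = q^{2ν+2}` and `Φ_r(z) = ∑ₙ (-1)ⁿ zⁿ / ((q²;q²)ₙ (r;q²)ₙ)`
(`besselSeries r (q ^ 2) z`), so that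
`J_μ^{(1)}(λy | q²) = (q^{2μ+2};q²)_∞ / (q²;q²)_∞ · v^μ Φ_{q^{2μ+2}}(v²)` with `v = λy(1-q)`.
Shifting the infinite products, `(-u²/q²;q²)_∞ = (1 + u²/q²)(-u²;q²)_∞` and
`(r;q²)_∞ = (1 - r)(rq²;q²)_∞`, the claim becomes the contiguous relation
`(1 + w) Φ_{rq²}(w) - r Φ_{rq²}(wq²) = (1 - r) Φ_r(wq²)` at `w = u²/q²`.
Comparing coefficients of `wⁿ⁺¹`, this reduces to `(r;q²)ₙ₊₁ = (1 - r)(rq²;q²)ₙ` and the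
recursion `(a;q²)ₙ₊₁ = (a;q²)ₙ (1 - aq²ⁿ)`.
-/

/-- The Jackson `q`-derivative `(D_q f)(x) = (f(x) - f(qx)) / ((1-q)x)`. -/
noncomputable def qDeriv (q : ℝ) (f : ℝ → ℝ) (x : ℝ) : ℝ :=
  (f x - f (q * x)) / ((1 - q) * x)

/-- The finite q-shifted factorial `(z; q)_n`. -/
noncomputable def qPoch (z q : ℝ) (n : ℕ) : ℝ :=
  ∏ k ∈ Finset.range n, (1 - z * q ^ k)

/-- The infinite q-shifted factorial `(z; q)_∞`. -/
noncomputable def qPochInf (z q : ℝ) : ℝ :=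
  ∏' k : ℕ, (1 - z * q ^ k)

/-- The first Jackson q-Bessel function in the notation
`J_ν^{(1)}(λx | q²) = J_ν^{(1)}(2λx(1−q); q²)`. -/
noncomputable def J1 (q ν lam x : ℝ) : ℝ :=
  (qPochInf (q ^ (2 * ν + 2)) (q ^ 2) / qPochInf (q ^ 2) (q ^ 2)) *
    ∑' n : ℕ, ((-1 : ℝ) ^ n * (lam * x * (1 - q)) ^ (2 * (n : ℝ) + ν)) /
      (qPoch (q ^ 2) (q ^ 2) n *
        ∏ j ∈ Finset.range n, (1 - q ^ (2 * ν + 2 + 2 * (j : ℝ))))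

lemma qPoch_succ (z A : ℝ) (n : ℕ) : qPoch z A (n + 1) = qPoch z A n * (1 - z * A ^ n) :=
  Finset.prod_range_succ _ _

lemma qPoch_succ' (z A : ℝ) (n : ℕ) : qPoch z A (n + 1) = (1 - z) * qPoch (z * A) A n := by
  rw [qPoch, Finset.prod_range_succ', pow_zero, mul_one, mul_comm, qPoch]
  exact congrArg _ (Finset.prod_congr rfl fun k _ => by ring)

section QPochhammer

variable {z A : ℝ}

lemma one_sub_mul_pow_pos (hz0 : 0 ≤ z) (hz1 : z < 1) (hA0 : 0 ≤ A) (hA1 : A ≤ 1) (k : ℕ) :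
    0 < 1 - z * A ^ k := by
  have : z * A ^ k ≤ z := mul_le_of_le_one_right hz0 (pow_le_one₀ hA0 hA1)
  linarith

lemma qPoch_pos (hz0 : 0 ≤ z) (hz1 : z < 1) (hA0 : 0 ≤ A) (hA1 : A ≤ 1) (n : ℕ) :
    0 < qPoch z A n :=
  Finset.prod_pos fun k _ => one_sub_mul_pow_pos hz0 hz1 hA0 hA1 k

/-- Bernoulli's inequality `(1 - z) ^ A ^ k ≤ 1 - z * A ^ k`, multiplied over `k < n`. -/
lemma rpow_le_qPoch (hz0 : 0 ≤ z) (hz1 : z < 1) (hA0 : 0 ≤ A) (hA1 : A < 1) (n : ℕ) :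
    (1 - z) ^ (1 - A)⁻¹ ≤ qPoch z A n := by
  have hz : 0 < 1 - z := by linarith
  calc (1 - z) ^ (1 - A)⁻¹ ≤ (1 - z) ^ (∑ k ∈ Finset.range n, A ^ k) := by
        refine Real.rpow_le_rpow_of_exponent_ge hz (by linarith) ?_
        rw [Finset.range_eq_Ico, inv_eq_one_div, ← pow_zero A]
        exact geom_sum_Ico_le_of_lt_one hA0 hA1
    _ = ∏ k ∈ Finset.range n, (1 - z) ^ (A ^ k) := Real.rpow_sum_of_pos hz _ _
    _ ≤ qPoch z A n := by
        refine Finset.prod_le_prod (fun k _ => by positivity) fun k _ => ?_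
        have := rpow_one_add_le_one_add_mul_self (s := -z) (by linarith)
          (pow_nonneg hA0 k) (pow_le_one₀ hA0 hA1.le)
        simpa [sub_eq_add_neg, mul_comm] using this

lemma multipliable_one_sub_mul_pow (z : ℝ) (hA : |A| < 1) :
    Multipliable fun k : ℕ => 1 - z * A ^ k := by
  simpa only [Pi.neg_apply, ← sub_eq_add_neg] using Real.multipliable_one_add_of_summable
    ((summable_geometric_of_abs_lt_one hA).mul_left z).neg

lemma qPochInf_eq_mul (z : ℝ) (hA : |A| < 1) : qPochInf z A = (1 - z) * qPochInf (z * A) A := by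
  have hmult : Multipliable fun k : ℕ => 1 - z * A ^ (k + 1) := by
    simpa only [pow_succ', mul_assoc] using multipliable_one_sub_mul_pow (z * A) hA
  rw [qPochInf, tprod_eq_zero_mul' (f := fun k => 1 - z * A ^ k) hmult, qPochInf, pow_zero,
    mul_one]
  simp only [pow_succ', mul_assoc]

end QPochhammer

noncomputable def besselCoeff (r Q : ℝ) (n : ℕ) : ℝ :=
  (-1) ^ n / (qPoch Q Q n * qPoch r Q n)

noncomputable def besselSeries (r Q z : ℝ) : ℝ :=
  ∑' n, besselCoeff r Q n * z ^ n

section BesselSeries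

variable {r Q : ℝ}

lemma besselCoeff_zero (r Q : ℝ) : besselCoeff r Q 0 = 1 := by
  simp [besselCoeff, qPoch]

lemma besselCoeff_contiguous (hr0 : 0 ≤ r) (hr1 : r < 1) (hQ0 : 0 ≤ Q) (hQ1 : Q < 1) (n : ℕ) :
    besselCoeff (r * Q) Q (n + 1) * (1 - r * Q ^ (n + 1)) + besselCoeff (r * Q) Q n =
      (1 - r) * besselCoeff r Q (n + 1) * Q ^ (n + 1) := by
  have hrQ0 : 0 ≤ r * Q := mul_nonneg hr0 hQ0
  have hrQ1 : r * Q < 1 := (mul_le_of_le_one_right hr0 hQ1.le).trans_lt hr1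
  have hP := (qPoch_pos hQ0 hQ1 hQ0 hQ1.le n).ne'
  have hR := (qPoch_pos hrQ0 hrQ1 hQ0 hQ1.le n).ne'
  have hP1 : 1 - Q ^ (n + 1) ≠ 0 := (sub_pos.2 (pow_lt_one₀ hQ0 hQ1 n.succ_ne_zero)).ne'
  have hR1 : 1 - Q ^ (n + 1) * r ≠ 0 := by
    rw [mul_comm]; exact (one_sub_mul_pow_pos hr0 hr1 hQ0 hQ1.le (n + 1)).ne'
  have hr := (sub_pos.2 hr1).ne'
  rw [besselCoeff, besselCoeff, besselCoeff, qPoch_succ Q, qPoch_succ (r * Q), qPoch_succ' r,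
    pow_succ (-1 : ℝ), mul_assoc r, ← pow_succ']
  generalize Q ^ (n + 1) = X at hP1 hR1 ⊢
  field_simp
  ring

lemma summable_besselCoeff_mul_pow (hr0 : 0 ≤ r) (hr1 : r < 1) (hQ0 : 0 ≤ Q) (hQ1 : Q < 1)
    {z : ℝ} (hz : |z| < 1) : Summable fun n => besselCoeff r Q n * z ^ n := by
  set δ := (1 - Q) ^ (1 - Q)⁻¹ * (1 - r) ^ (1 - Q)⁻¹
  have hδ : 0 < δ := by positivity
  refine ((summable_geometric_of_lt_one (abs_nonneg z) hz).mul_left δ⁻¹).of_norm_bounded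
    fun n => ?_
  have hPR : δ ≤ qPoch Q Q n * qPoch r Q n :=
    mul_le_mul (rpow_le_qPoch hQ0 hQ1 hQ0 hQ1 n) (rpow_le_qPoch hr0 hr1 hQ0 hQ1 n)
      (by positivity) (qPoch_pos hQ0 hQ1 hQ0 hQ1.le n).le
  calc ‖besselCoeff r Q n * z ^ n‖ = |z| ^ n / (qPoch Q Q n * qPoch r Q n) := by
        rw [besselCoeff, norm_mul, norm_div, norm_pow, norm_pow, norm_neg, norm_one, one_pow,
          Real.norm_of_nonneg (hδ.le.trans hPR), Real.norm_eq_abs]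
        ring
    _ ≤ |z| ^ n / δ := div_le_div_of_nonneg_left (by positivity) hδ hPR
    _ = δ⁻¹ * |z| ^ n := by ring

theorem besselSeries_contiguous (hr0 : 0 ≤ r) (hr1 : r < 1) (hQ0 : 0 ≤ Q) (hQ1 : Q < 1)
    {w : ℝ} (hw : |w| < 1) :
    (1 + w) * besselSeries (r * Q) Q w - r * besselSeries (r * Q) Q (w * Q) =
      (1 - r) * besselSeries r Q (w * Q) := by
  have hrQ0 : 0 ≤ r * Q := mul_nonneg hr0 hQ0
  have hrQ1 : r * Q < 1 := (mul_le_of_le_one_right hr0 hQ1.le).trans_lt hr1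
  have hwQ : |w * Q| < 1 := by
    rw [abs_mul, abs_of_nonneg hQ0]
    nlinarith [abs_nonneg w]
  set f := fun n => besselCoeff (r * Q) Q n * w ^ n
  set g := fun n => besselCoeff (r * Q) Q n * (w * Q) ^ n
  set h := fun n => besselCoeff r Q n * (w * Q) ^ n
  have hf : Summable f := summable_besselCoeff_mul_pow hrQ0 hrQ1 hQ0 hQ1 hw
  have hg : Summable g := summable_besselCoeff_mul_pow hrQ0 hrQ1 hQ0 hQ1 hwQ
  have hh : Summable h := summable_besselCoeff_mul_pow hr0 hr1 hQ0 hQ1 hwQ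
  set d := fun n => (1 - r) * h n - (f n - r * g n)
  have hd : Summable d := (hh.mul_left _).sub (hf.sub (hg.mul_left r))
  have hd0 : d 0 = 0 := by simp [d, f, g, h, besselCoeff_zero]
  have hd_succ (n : ℕ) : d (n + 1) = w * f n := by
    simp only [d, f, g, h, mul_pow, pow_succ w]
    linear_combination -(w ^ n * w) * besselCoeff_contiguous hr0 hr1 hQ0 hQ1 n
  have hsum : ∑' n, d n = w * ∑' n, f n := by
    rw [hd.tsum_eq_zero_add, hd0, zero_add, ← tsum_mul_left]
    exact tsum_congr hd_succ
  rw [hh.mul_left _ |>.tsum_sub (hf.sub (hg.mul_left r)), hf.tsum_sub (hg.mul_left r),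
    tsum_mul_left, tsum_mul_left] at hsum
  simp only [besselSeries]
  linarith

end BesselSeries

lemma rpow_two_mul_natCast {x : ℝ} (hx : 0 ≤ x) (n : ℕ) : x ^ (2 * (n : ℝ)) = (x ^ 2) ^ n := by
  rw [Real.rpow_mul_natCast hx, Real.rpow_two]

lemma J1_eq_besselSeries {q : ℝ} (hq : 0 < q) (μ lam y : ℝ) (hw : 0 < lam * y * (1 - q)) :
    J1 q μ lam y = qPochInf ((q ^ (μ + 1)) ^ 2) (q ^ 2) / qPochInf (q ^ 2) (q ^ 2) *
      ((lam * y * (1 - q)) ^ μ *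
        besselSeries ((q ^ (μ + 1)) ^ 2) (q ^ 2) ((lam * y * (1 - q)) ^ 2)) := by
  have hsq : q ^ (2 * μ + 2) = (q ^ (μ + 1)) ^ 2 := by
    rw [← Real.rpow_two, ← Real.rpow_mul hq.le]; ring_nf
  rw [J1, besselSeries, hsq, ← tsum_mul_left (a := (lam * y * (1 - q)) ^ μ)]
  congr 1
  refine tsum_congr fun n => ?_
  have hpoch : ∏ j ∈ Finset.range n, (1 - q ^ (2 * μ + 2 + 2 * (j : ℝ))) =
      qPoch ((q ^ (μ + 1)) ^ 2) (q ^ 2) n :=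
    Finset.prod_congr rfl fun j _ => by rw [Real.rpow_add hq, hsq, rpow_two_mul_natCast hq.le]
  rw [hpoch, besselCoeff, add_comm, Real.rpow_add hw, rpow_two_mul_natCast hw.le]
  ring

/-- `∫ x^{ν+1}(−x²λ²(1−q)²;q²)_∞ J_ν^{(1)}(λx|q²) d_q x
  = ((qx)^{ν+1}/λ)(−x²λ²(1−q)²/q²;q²)_∞ J_{ν+1}^{(1)}(λx/q|q²)`. -/
theorem qIntegral_J1_nu (q lam ν : ℝ) (hq : 0 < q) (hq1 : q < 1)
    (hlam : 0 < lam) (hν : -1 < ν) :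
    ∀ x : ℝ, 0 < x → lam * x * (1 - q) < q →
      qDeriv q
        (fun t => (q * t) ^ (ν + 1) / lam *
          qPochInf (-(t ^ 2 * lam ^ 2 * (1 - q) ^ 2 / q ^ 2)) (q ^ 2) *
          J1 q (ν + 1) lam (t / q)) x
      = x ^ (ν + 1) * qPochInf (-(x ^ 2 * lam ^ 2 * (1 - q) ^ 2)) (q ^ 2) *
          J1 q ν lam x := by
  intro x hx hxq
  have hu : 0 < lam * x * (1 - q) := mul_pos (mul_pos hlam hx) (by linarith)
  have hQ1 : q ^ 2 < 1 := by nlinarith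
  have hr1 : (q ^ (ν + 1)) ^ 2 < 1 :=
    pow_lt_one₀ (by positivity) (Real.rpow_lt_one hq.le hq1 (by linarith)) two_ne_zero
  have hw : |(lam * x * (1 - q) / q) ^ 2| < 1 := by
    rw [abs_of_nonneg (by positivity)]
    exact pow_lt_one₀ (by positivity) ((div_lt_one hq).2 hxq) two_ne_zero
  have hQ : |q ^ 2| < 1 := by rwa [abs_of_nonneg (sq_nonneg q)]
  have key := besselSeries_contiguous (by positivity) hr1 (sq_nonneg q) hQ1 hw
  rw [div_pow, div_mul_cancel₀ _ (by positivity), ← div_pow] at key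
  have hsq (t : ℝ) : t ^ 2 * lam ^ 2 * (1 - q) ^ 2 = (lam * t * (1 - q)) ^ 2 := by ring
  have hxq' : lam * (x / q) * (1 - q) = lam * x * (1 - q) / q := by ring
  simp only [qDeriv, hsq, mul_div_cancel_left₀ x hq.ne']
  rw [show (lam * (q * x) * (1 - q)) ^ 2 / q ^ 2 = (lam * x * (1 - q)) ^ 2 by field_simp,
    J1_eq_besselSeries hq _ _ _ (hxq' ▸ div_pos hu hq), hxq', J1_eq_besselSeries hq _ _ _ hu,
    J1_eq_besselSeries hq _ _ _ hu, Real.rpow_add_one hq.ne' (ν + 1), mul_pow (q ^ (ν + 1)),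
    qPochInf_eq_mul _ hQ, qPochInf_eq_mul ((q ^ (ν + 1)) ^ 2) hQ, neg_mul,
    div_mul_cancel₀ _ (by positivity), ← mul_assoc q q x, Real.mul_rpow hq.le hx.le,
    Real.mul_rpow (by positivity) hx.le, Real.mul_rpow hq.le hq.le, Real.div_rpow hu.le hq.le,
    Real.rpow_add_one hu.ne']
  -- opaque names keep `field_simp` from rewriting the arguments of the series and products
  generalize besselSeries ((q ^ (ν + 1)) ^ 2 * q ^ 2) (q ^ 2) ((lam * x * (1 - q) / q) ^ 2) = S₁,
    besselSeries ((q ^ (ν + 1)) ^ 2 * q ^ 2) (q ^ 2) ((lam * x * (1 - q)) ^ 2) = S₂,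
    besselSeries ((q ^ (ν + 1)) ^ 2) (q ^ 2) ((lam * x * (1 - q)) ^ 2) = S₃,
    qPochInf (-(lam * x * (1 - q)) ^ 2) (q ^ 2) = Θ,
    qPochInf ((q ^ (ν + 1)) ^ 2 * q ^ 2) (q ^ 2) = K at key ⊢
  have : 1 - q ≠ 0 := by linarith
  field_simp at key ⊢
  linear_combination Θ * K / qPochInf (q ^ 2) (q ^ 2) * key
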